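/- arXiv:2408.12822 — 4 statements merged into one kernel-verified Lean document; each statement's English description precedes it below -/
import Mathlib

section
/- (Theorem 1, probabilistic core.) Let (Ω, ℱ, P) be a probability space, H : Ω → ℝ an integrable random variable, and α ∈ (0,1). If P(H ≥ VaR_α(H)) > 0 and CVaR_α(H) ≤ 0, then P(H ≤ 0) ≥ 1 − α. -/
/-!
If `VaR_α(H)` were positive, then `H ≥ VaR_α(H) > 0` on the event defining `CVaR_α(H)`, which has
positive probability, so `CVaR_α(H) ≥ VaR_α(H) > 0`. Hence `VaR_α(H) ≤ 0`, so `P(H ≥ t) ≤ α` for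
every `t > 0`, and continuity from below gives `P(H > 0) ≤ α`, i.e. `P(H ≤ 0) ≥ 1 - α`.
-/

open MeasureTheory

/-- Value-at-risk at confidence level `α`:
`VaR_α(H) = inf { t : ℝ | P(H ≥ t) ≤ α }`. -/
noncomputable def VaR {Ω : Type*} [MeasurableSpace Ω] (P : Measure Ω) (H : Ω → ℝ) (α : ℝ) : ℝ :=
  sInf {t : ℝ | (P {ω | t ≤ H ω}).toReal ≤ α}

/-- Conditional value-at-risk: the conditional expectation of `H` given the
event `{H ≥ VaR_α(H)}`. -/
noncomputable def CVaR {Ω : Type*} [MeasurableSpace Ω] (P : Measure Ω) (H : Ω → ℝ) (α : ℝ) : ℝ :=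
  (∫ ω in {ω | VaR P H α ≤ H ω}, H ω ∂P) / (P {ω | VaR P H α ≤ H ω}).toReal

open Filter Topology Set
open scoped ENNReal

section LevelSets

variable {Ω : Type*} [MeasurableSpace Ω] {μ : Measure Ω} {f : Ω → ℝ}

theorem measure_lt_le_of_forall_lt_measure_le {a : ℝ} {c : ℝ≥0∞}
    (h : ∀ t, a < t → μ {x | t ≤ f x} ≤ c) : μ {x | a < f x} ≤ c := by
  obtain ⟨u, hu_anti, hau, hu_lim⟩ := exists_seq_strictAnti_tendsto a
  have hunion : {x | a < f x} = ⋃ n, {x | u n ≤ f x} := by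
    have h := congrArg (f ⁻¹' ·) (iUnion_Ici_eq_Ioi_of_lt_of_tendsto hau hu_lim)
    simp only [preimage_iUnion] at h
    exact h.symm
  have hmono : Monotone fun n => {x | u n ≤ f x} :=
    fun _ _ hmn _ hx => (hu_anti.antitone hmn).trans hx
  rw [hunion, hmono.measure_iUnion]
  exact iSup_le fun n => h _ (hau n)

theorem tendsto_measure_const_le_atTop [IsFiniteMeasure μ] (hf : AEMeasurable f μ) :
    Tendsto (fun t => μ {x | t ≤ f x}) atTop (𝓝 0) := by
  have hempty : ⋂ t : ℝ, {x | t ≤ f x} = ∅ :=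
    eq_empty_iff_forall_notMem.2 fun x hx =>
      (lt_add_one (f x)).not_ge (mem_iInter.1 hx (f x + 1))
  simpa only [hempty, measure_empty, Function.comp_def] using
    tendsto_measure_iInter_atTop (s := fun t => {x | t ≤ f x})
      (fun _ => hf.nullMeasurable measurableSet_Ici) (fun _ _ hst _ hx => hst.trans hx)
      ⟨0, measure_ne_top μ _⟩

end LevelSets

section RiskMeasures

variable {Ω : Type*} [MeasurableSpace Ω] {P : Measure Ω} {H : Ω → ℝ} {α : ℝ}

theorem measure_const_le_le_of_VaR_lt [IsFiniteMeasure P] (hH : AEMeasurable H P) (hα : 0 < α)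
    {t : ℝ} (ht : VaR P H α < t) : P {ω | t ≤ H ω} ≤ ENNReal.ofReal α := by
  have hne : {s : ℝ | (P {ω | s ≤ H ω}).toReal ≤ α}.Nonempty :=
    (((ENNReal.tendsto_toReal ENNReal.zero_ne_top).comp
      (tendsto_measure_const_le_atTop hH)).eventually (ge_mem_nhds hα)).exists
  obtain ⟨s, hs, hst⟩ := exists_lt_of_csInf_lt hne ht
  rw [ENNReal.le_ofReal_iff_toReal_le (measure_ne_top P _) hα.le]
  exact (ENNReal.toReal_mono (measure_ne_top P _)
    (measure_mono fun _ hω => hst.le.trans hω)).trans hs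

theorem VaR_le_CVaR (hH : Integrable H P) (hpos : 0 < (P {ω | VaR P H α ≤ H ω}).toReal) :
    VaR P H α ≤ CVaR P H α := by
  set A := {ω | VaR P H α ≤ H ω}
  have hA_fin : P A ≠ ⊤ := (ENNReal.toReal_pos_iff.1 hpos).2.ne
  have hA : NullMeasurableSet A P := hH.aemeasurable.nullMeasurable measurableSet_Ici
  rw [CVaR, le_div_iff₀ hpos]
  calc VaR P H α * (P A).toReal = ∫ _ in A, VaR P H α ∂P := by
        rw [setIntegral_const, smul_eq_mul, mul_comm, measureReal_def]
    _ ≤ ∫ ω in A, H ω ∂P :=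
        setIntegral_mono_on₀ (integrableOn_const hA_fin) hH.integrableOn hA fun _ hω => hω

end RiskMeasures

/-- Theorem 1 (probabilistic core): if `P(H ≥ VaR_α(H)) > 0` and `CVaR_α(H) ≤ 0`,
then `P(H ≤ 0) ≥ 1 − α`. -/
theorem cvar_nonpos_imp_safety
    {Ω : Type*} [MeasurableSpace Ω] (P : Measure Ω) [IsProbabilityMeasure P]
    (H : Ω → ℝ) (hH : Integrable H P) (α : ℝ) (hα : α ∈ Set.Ioo (0 : ℝ) 1)
    (hpos : 0 < (P {ω | VaR P H α ≤ H ω}).toReal)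
    (hcvar : CVaR P H α ≤ 0) :
    1 - α ≤ (P {ω | H ω ≤ 0}).toReal := by
  have hVaR : VaR P H α ≤ 0 := (VaR_le_CVaR hH hpos).trans hcvar
  have hunsafe : (P {ω | 0 < H ω}).toReal ≤ α :=
    ENNReal.toReal_le_of_le_ofReal hα.1.le <| measure_lt_le_of_forall_lt_measure_le fun _ ht =>
      measure_const_le_le_of_VaR_lt hH.aemeasurable hα.1 (hVaR.trans_lt ht)
  have hsafe : {ω | H ω ≤ 0} = {ω | 0 < H ω}ᶜ := by
    ext
    simp
  have hcompl : (P {ω | 0 < H ω}ᶜ).toReal = 1 - (P {ω | 0 < H ω}).toReal :=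
    probReal_compl_eq_one_sub₀ (hH.aemeasurable.nullMeasurable measurableSet_Ioi)
  rw [hsafe, hcompl]
  linarith
end

section
/- (Equation (12): Acerbi–Tasche identity for Gaussian risks.) Let H : Ω → ℝ be a random variable whose law is the Gaussian measure on ℝ with mean μ ∈ ℝ and variance v > 0, and let α ∈ (0,1). Then (1/α) · ∫_{1−α}^{1} VaR_{1−λ}(H) dλ = E[H | H ≥ VaR_α(H)]; that is, the average of the value-at-risk over the worst α-tail of confidence levels equals the conditional value-at-risk. -/
open MeasureTheory ProbabilityTheory
open scoped NNReal

open Set Filter Function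

lemma VaR_eq_VaR_map {Ω : Type*} [MeasurableSpace Ω] {P : Measure Ω} {H : Ω → ℝ}
    (hH : Measurable H) : VaR P H = VaR (P.map H) id := by
  ext β
  unfold VaR
  congr! 5 with t
  exact (Measure.map_apply hH measurableSet_Ici).symm

section Quantile

variable {ν : Measure ℝ} [IsProbabilityMeasure ν]

lemma continuous_cdf [NullSingletonClass ν] : Continuous (cdf ν) := by
  refine continuous_iff_continuousAt.2 fun x ↦ ?_
  have hleft : leftLim (cdf ν) x = cdf ν x := by
    have hjump := (cdf ν).measure_singleton x
    rw [measure_cdf, measure_singleton, eq_comm, ENNReal.ofReal_eq_zero, sub_nonpos] at hjump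
    exact le_antisymm ((cdf ν).mono.leftLim_le le_rfl) hjump
  rw [(cdf ν).mono.continuousAt_iff_leftLim_eq_rightLim, hleft, (cdf ν).rightLim_eq]

lemma strictMono_cdf [ν.IsOpenPosMeasure] : StrictMono (cdf ν) := by
  intro a b hab
  have hpos : 0 < ν (Ioc a b) :=
    (Measure.measure_Ioo_pos ν |>.2 hab).trans_le (measure_mono Ioo_subset_Ioc_self)
  rwa [← measure_cdf (μ := ν), (cdf ν).measure_Ioc, ENNReal.ofReal_pos, sub_pos] at hpos

lemma measureReal_Ici_eq_one_sub_cdf [NullSingletonClass ν] (t : ℝ) :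
    ν.real (Ici t) = 1 - cdf ν t := by
  rw [← measureReal_congr Ioi_ae_eq_Ici, ← compl_Iic, probReal_compl_eq_one_sub measurableSet_Iic,
    cdf_eq_real]

lemma exists_cdf_eq [NullSingletonClass ν] {p : ℝ} (hp : p ∈ Ioo 0 1) : ∃ t, cdf ν t = p :=
  mem_range_of_exists_le_of_exists_ge continuous_cdf
    ((tendsto_cdf_atBot (μ := ν)).eventually (eventually_le_nhds hp.1)).exists
    ((tendsto_cdf_atTop (μ := ν)).eventually (eventually_ge_nhds hp.2)).exists

variable [NullSingletonClass ν] [ν.IsOpenPosMeasure] {α β : ℝ}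

lemma VaR_id_eq_of_cdf_eq {t : ℝ} (ht : cdf ν t = 1 - β) : VaR ν id β = t := by
  have hset : {s : ℝ | (ν {ω | s ≤ id ω}).toReal ≤ β} = Ici t := by
    ext s
    change ν.real (Ici s) ≤ β ↔ t ≤ s
    rw [measureReal_Ici_eq_one_sub_cdf, sub_le_comm, ← ht, (strictMono_cdf (ν := ν)).le_iff_le]
  rw [VaR, hset, csInf_Ici]

lemma cdf_VaR_id (hβ : β ∈ Ioo 0 1) : cdf ν (VaR ν id β) = 1 - β := by
  obtain ⟨t, ht⟩ := exists_cdf_eq (ν := ν) (p := 1 - β) ⟨by linarith [hβ.2], by linarith [hβ.1]⟩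
  rwa [VaR_id_eq_of_cdf_eq ht]

lemma measureReal_Ici_VaR_id (hβ : β ∈ Ioo 0 1) : ν.real (Ici (VaR ν id β)) = β := by
  rw [measureReal_Ici_eq_one_sub_cdf, cdf_VaR_id hβ, sub_sub_cancel]

lemma le_VaR_id_iff (hβ : β ∈ Ioo 0 1) {t : ℝ} : t ≤ VaR ν id β ↔ β ≤ ν.real (Ici t) := by
  rw [← (strictMono_cdf (ν := ν)).le_iff_le, cdf_VaR_id hβ, measureReal_Ici_eq_one_sub_cdf, le_sub_comm]

lemma antitoneOn_VaR_id : AntitoneOn (VaR ν id) (Ioo 0 1) := fun β₁ h₁ β₂ h₂ h ↦ by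
  rwa [le_VaR_id_iff h₁, measureReal_Ici_VaR_id h₂]

lemma aemeasurable_VaR_id (hα : α < 1) : AEMeasurable (VaR ν id) (volume.restrict (Ioc 0 α)) :=
  aemeasurable_restrict_of_antitoneOn measurableSet_Ioc
    (antitoneOn_VaR_id.mono (Ioc_subset_Ioo_right hα))

lemma map_VaR_id_restrict_Ioc (hα : α ∈ Ioo 0 1) :
    (volume.restrict (Ioc 0 α)).map (VaR ν id) = ν.restrict (Ici (VaR ν id α)) := by
  refine (Measure.ext_of_Ici _ _ fun t ↦ ?_).symm
  have hpre : VaR ν id ⁻¹' Ici t ∩ Ioc 0 α = Ioc 0 (min α (ν.real (Ici t))) := by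
    ext β
    simp only [mem_inter_iff, mem_preimage, mem_Ici, mem_Ioc, le_min_iff]
    constructor
    · rintro ⟨h, h0, hβα⟩
      exact ⟨h0, hβα, (le_VaR_id_iff ⟨h0, hβα.trans_lt hα.2⟩).1 h⟩
    · rintro ⟨h0, hβα, h⟩
      exact ⟨(le_VaR_id_iff ⟨h0, hβα.trans_lt hα.2⟩).2 h, h0, hβα⟩
  have hanti : Antitone fun s : ℝ ↦ ν.real (Ici s) := fun a b h ↦
    measureReal_mono (Ici_subset_Ici.2 h)
  rw [Measure.restrict_apply measurableSet_Ici, Ici_inter_Ici,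
    Measure.map_apply_of_aemeasurable (aemeasurable_VaR_id hα.2) measurableSet_Ici,
    Measure.restrict_apply' measurableSet_Ioc, hpre, Real.volume_Ioc, sub_zero,
    ← ofReal_measureReal, hanti.map_max, measureReal_Ici_VaR_id hα, min_comm]

lemma intervalIntegral_VaR_id (hα : α ∈ Ioo 0 1) :
    ∫ β in 0..α, VaR ν id β = ∫ x in Ici (VaR ν id α), x ∂ν := by
  rw [intervalIntegral.integral_of_le hα.1.le, ← map_VaR_id_restrict_Ioc hα,
    integral_map (f := fun x ↦ x) (aemeasurable_VaR_id hα.2) aestronglyMeasurable_id]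

end Quantile

theorem acerbi_tasche_gaussian_general
    {Ω : Type*} [MeasurableSpace Ω] (P : Measure Ω)
    (H : Ω → ℝ) (hmeas : Measurable H) (μ : ℝ) (v : ℝ≥0) (hv : 0 < v)
    (hlaw : P.map H = gaussianReal μ v)
    (α : ℝ) (hα : α ∈ Set.Ioo (0 : ℝ) 1) :
    (1 / α) * ∫ l in (1 - α)..(1 : ℝ), VaR P H (1 - l)
      = (∫ ω in {ω | VaR P H α ≤ H ω}, H ω ∂P) / (P {ω | VaR P H α ≤ H ω}).toReal := by
  have := nullSingletonClass_gaussianReal (μ := μ) hv.ne'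
  have := (gaussianReal_absolutelyContinuous' μ hv.ne').isOpenPosMeasure
  have hpre (t : ℝ) : {ω | t ≤ H ω} = H ⁻¹' Ici t := rfl
  rw [intervalIntegral.integral_comp_sub_left (fun β ↦ VaR P H β), sub_self, sub_sub_cancel,
    hpre, ← setIntegral_map (f := fun x ↦ x) measurableSet_Ici aestronglyMeasurable_id
      hmeas.aemeasurable,
    ← Measure.map_apply hmeas measurableSet_Ici, VaR_eq_VaR_map hmeas, hlaw,
    intervalIntegral_VaR_id hα, ← measureReal_def, measureReal_Ici_VaR_id hα, one_div_mul_eq_div]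

/-- Equation (12): the Acerbi–Tasche identity for Gaussian risks. The average of
the value-at-risk over the worst `α`-tail of confidence levels equals the
conditional expectation of `H` given `{H ≥ VaR_α(H)}`. -/
theorem acerbi_tasche_gaussian
    {Ω : Type*} [MeasurableSpace Ω] (P : Measure Ω) [IsProbabilityMeasure P]
    (H : Ω → ℝ) (hmeas : Measurable H) (μ : ℝ) (v : ℝ≥0) (hv : 0 < v)
    (hlaw : P.map H = gaussianReal μ v)
    (α : ℝ) (hα : α ∈ Set.Ioo (0 : ℝ) 1) :
    (1 / α) * ∫ l in (1 - α)..(1 : ℝ), VaR P H (1 - l)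
      = (∫ ω in {ω | VaR P H α ≤ H ω}, H ω ∂P) / (P {ω | VaR P H α ≤ H ω}).toReal :=
  acerbi_tasche_gaussian_general P H hmeas μ v hv hlaw α hα
end

section
/- (Lemma 1, forward invariance with linear class-K function.) Let d, m be positive integers, γ ≥ 0, and let h : ℝ^d → ℝ be continuously differentiable. Let f : ℝ^d → ℝ^d, g : ℝ^d → (ℝ^m →ₗ ℝ^d), and u : ℝ^d → ℝ^m be such that for every x ∈ ℝ^d the CBF condition ⟪∇h(x), f(x) + g(x)(u(x))⟫ ≥ −γ · h(x) holds. Let x : ℝ → ℝ^d be a trajectory satisfying the closed-loop dynamics, i.e., x is differentiable with x′(t) = f(x(t)) + g(x(t))(u(x(t))) for all t ≥ 0. If h(x(0)) ≥ 0, then h(x(t)) ≥ 0 for all t ≥ 0. -/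
open scoped RealInnerProductSpace

/-!
Along a closed-loop trajectory, `φ t = h (x t)` satisfies `φ' t = ⟪∇h (x t), ẋ t⟫ ≥ -γ φ t` by the
chain rule and the CBF condition. The integrating factor `exp (γ t)` makes `φ t * exp (γ t)`
nondecreasing, so `φ t * exp (γ t) ≥ φ 0 ≥ 0`.
-/

open Set Real

theorem HasGradientAt.comp_hasDerivAt {E : Type*} [NormedAddCommGroup E] [InnerProductSpace ℝ E]
    [CompleteSpace E] {h : E → ℝ} {h' : E} {x : ℝ → E} {x' : E} {t : ℝ}
    (hh : HasGradientAt h h' (x t)) (hx : HasDerivAt x x' t) :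
    HasDerivAt (fun s => h (x s)) ⟪h', x'⟫ t := by
  rw [hasGradientAt_iff_hasFDerivAt] at hh
  exact hh.comp_hasDerivAt t hx

section Comparison

variable {φ φ' : ℝ → ℝ} {γ : ℝ}

theorem monotoneOn_mul_exp_of_neg_mul_le_deriv {D : Set ℝ} (hD : Convex ℝ D)
    (hφ : ∀ t ∈ D, HasDerivAt φ (φ' t) t) (hbound : ∀ t ∈ D, -γ * φ t ≤ φ' t) :
    MonotoneOn (fun t => φ t * exp (γ * t)) D := by
  have hderiv : ∀ t ∈ D, HasDerivAt (fun s => φ s * exp (γ * s))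
      ((φ' t + γ * φ t) * exp (γ * t)) t := fun t ht => by
    have hexp : HasDerivAt (fun s => exp (γ * s)) (exp (γ * t) * γ) t := by
      simpa using ((hasDerivAt_id t).const_mul γ).exp
    exact ((hφ t ht).mul hexp).congr_deriv (by ring)
  refine monotoneOn_of_hasDerivWithinAt_nonneg hD
    (fun t ht => (hderiv t ht).continuousAt.continuousWithinAt)
    (fun t ht => (hderiv t (interior_subset ht)).hasDerivWithinAt) fun t ht => ?_
  have : 0 ≤ φ' t + γ * φ t := by linarith [hbound t (interior_subset ht)]
  positivity

theorem nonneg_of_neg_mul_le_deriv (hφ : ∀ t, 0 ≤ t → HasDerivAt φ (φ' t) t)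
    (hbound : ∀ t, 0 ≤ t → -γ * φ t ≤ φ' t) (h0 : 0 ≤ φ 0) {t : ℝ} (ht : 0 ≤ t) :
    0 ≤ φ t := by
  have hmono := monotoneOn_mul_exp_of_neg_mul_le_deriv (convex_Ici 0) hφ hbound
  have : φ 0 ≤ φ t * exp (γ * t) := by
    simpa using hmono self_mem_Ici ht ht
  exact nonneg_of_mul_nonneg_left (h0.trans this) (exp_pos _)

end Comparison

theorem cbf_forward_invariance_general
    (d m : ℕ) (γ : ℝ)
    (h : EuclideanSpace ℝ (Fin d) → ℝ) (hh : ContDiff ℝ 1 h)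
    (f : EuclideanSpace ℝ (Fin d) → EuclideanSpace ℝ (Fin d))
    (g : EuclideanSpace ℝ (Fin d) → (EuclideanSpace ℝ (Fin m) →ₗ[ℝ] EuclideanSpace ℝ (Fin d)))
    (u : EuclideanSpace ℝ (Fin d) → EuclideanSpace ℝ (Fin m))
    (hcbf : ∀ x : EuclideanSpace ℝ (Fin d), -γ * h x ≤ ⟪gradient h x, f x + g x (u x)⟫)
    (x : ℝ → EuclideanSpace ℝ (Fin d))
    (hx : ∀ t : ℝ, 0 ≤ t → HasDerivAt x (f (x t) + g (x t) (u (x t))) t)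
    (h0 : 0 ≤ h (x 0)) :
    ∀ t : ℝ, 0 ≤ t → 0 ≤ h (x t) := by
  have hdiff : Differentiable ℝ h := hh.differentiable one_ne_zero
  intro t ht
  exact nonneg_of_neg_mul_le_deriv
    (fun s hs => (hdiff (x s)).hasGradientAt.comp_hasDerivAt (hx s hs))
    (fun s _ => hcbf (x s)) h0 ht

/-- Lemma 1, forward invariance with the linear class-K function `α(h) = γ h`:
if the CBF condition `⟪∇h(x), f(x) + g(x)u(x)⟫ ≥ −γ h(x)` holds everywhere and
`x(·)` is a closed-loop trajectory with `h(x(0)) ≥ 0`, then `h(x(t)) ≥ 0` for all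
`t ≥ 0`. -/
theorem cbf_forward_invariance
    (d m : ℕ) (hd : 0 < d) (hm : 0 < m) (γ : ℝ) (hγ : 0 ≤ γ)
    (h : EuclideanSpace ℝ (Fin d) → ℝ) (hh : ContDiff ℝ 1 h)
    (f : EuclideanSpace ℝ (Fin d) → EuclideanSpace ℝ (Fin d))
    (g : EuclideanSpace ℝ (Fin d) → (EuclideanSpace ℝ (Fin m) →ₗ[ℝ] EuclideanSpace ℝ (Fin d)))
    (u : EuclideanSpace ℝ (Fin d) → EuclideanSpace ℝ (Fin m))
    (hcbf : ∀ x : EuclideanSpace ℝ (Fin d), -γ * h x ≤ ⟪gradient h x, f x + g x (u x)⟫)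
    (x : ℝ → EuclideanSpace ℝ (Fin d))
    (hx : ∀ t : ℝ, 0 ≤ t → HasDerivAt x (f (x t) + g (x t) (u (x t))) t)
    (h0 : 0 ≤ h (x 0)) :
    ∀ t : ℝ, 0 ≤ t → 0 ≤ h (x t) :=
  cbf_forward_invariance_general d m γ h hh f g u hcbf x hx h0
end

section
/- (Lemma 2, sampled-data safety over one sampling interval with linear class-K function.) Let d be a positive integer, γ ≥ 0, δ ≥ 0, l ≥ 0, dt > 0. Let h : ℝ^d → ℝ be continuously differentiable, let F : ℝ^d → ℝ^d be the closed-loop vector field obtained by holding the control constant over the interval, and define Ψ : ℝ^d → ℝ by Ψ(x) := ⟪∇h(x), F(x)⟫ + γ · h(x). Assume Ψ is Lipschitz continuous with constant l, and ‖F(y)‖ ≤ δ for all y ∈ ℝ^d. Let x : ℝ → ℝ^d be differentiable with x′(t) = F(x(t)) for all t ∈ [0, dt]. If h(x(0)) ≥ 0 and Ψ(x(0)) ≥ l · δ · dt, then h(x(t)) ≥ 0 for all t ∈ [0, dt]. -/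
/-!
Along the trajectory, `φ(t) = h(x(t))` satisfies `φ' + γ φ = Ψ(x(t))`. The trajectory moves
at speed at most `δ`, so by the Lipschitz bound `Ψ(x(t)) ≥ Ψ(x(0)) - l δ t ≥ 0` on `[0, dt]`.
Hence `e^{γ t} φ(t)`, whose derivative is `e^{γ t} Ψ(x(t))`, is nondecreasing and stays
`≥ φ(0) ≥ 0`.
-/

open Set
open scoped RealInnerProductSpace NNReal

theorem HasGradientAt.comp_hasDerivWithinAt {F : Type*} [NormedAddCommGroup F]
    [InnerProductSpace ℝ F] [CompleteSpace F] {h : F → ℝ} {g : F} {x : ℝ → F} {v : F}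
    {s : Set ℝ} {t : ℝ} (hh : HasGradientAt h g (x t)) (hx : HasDerivWithinAt x v s t) :
    HasDerivWithinAt (fun s => h (x s)) ⟪g, v⟫ s t := by
  simpa only [Function.comp_def, InnerProductSpace.toDual_apply_apply] using
    hh.hasFDerivAt.comp_hasDerivWithinAt t hx

theorem LipschitzWith.sub_mul_le_apply_of_norm_deriv_le {E : Type*} [NormedAddCommGroup E]
    [NormedSpace ℝ E] {Ψ : E → ℝ} {K : ℝ≥0} (hΨ : LipschitzWith K Ψ) {x x' : ℝ → E}
    {δ a b : ℝ} (hx : ∀ t ∈ Icc a b, HasDerivWithinAt x (x' t) (Icc a b) t)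
    (hx' : ∀ t ∈ Ico a b, ‖x' t‖ ≤ δ) :
    ∀ t ∈ Icc a b, Ψ (x a) - K * (δ * (t - a)) ≤ Ψ (x t) := by
  intro t ht
  have hdist : dist (x a) (x t) ≤ δ * (t - a) := by
    rw [dist_comm, dist_eq_norm]
    exact norm_image_sub_le_of_norm_deriv_le_segment' hx hx' t ht
  linarith [hΨ.le_add_mul (x a) (x t), mul_le_mul_of_nonneg_left hdist K.coe_nonneg]

theorem monotoneOn_exp_mul_mul_of_deriv_add_mul_nonneg {φ φ' : ℝ → ℝ} {γ a b : ℝ}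
    (hφ : ∀ t ∈ Icc a b, HasDerivWithinAt φ (φ' t) (Icc a b) t)
    (hφ' : ∀ t ∈ Icc a b, 0 ≤ φ' t + γ * φ t) :
    MonotoneOn (fun t => Real.exp (γ * t) * φ t) (Icc a b) := by
  have hderiv : ∀ t ∈ Icc a b, HasDerivWithinAt (fun t => Real.exp (γ * t) * φ t)
      (Real.exp (γ * t) * (φ' t + γ * φ t)) (Icc a b) t := by
    intro t ht
    have hexp : HasDerivWithinAt (fun t => Real.exp (γ * t)) (Real.exp (γ * t) * γ)
        (Icc a b) t :=
      ((hasDerivAt_id' t).const_mul γ).exp.hasDerivWithinAt.congr_deriv (by rw [mul_one])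
    exact (hexp.mul (hφ t ht)).congr_deriv (by ring)
  exact monotoneOn_of_hasDerivWithinAt_nonneg (convex_Icc a b)
    (fun t ht => (hderiv t ht).continuousWithinAt)
    (fun t ht => (hderiv t (interior_subset ht)).mono interior_subset)
    (fun t ht => mul_nonneg (Real.exp_nonneg _) (hφ' t (interior_subset ht)))

theorem nonneg_of_deriv_add_mul_nonneg {φ φ' : ℝ → ℝ} {γ a b : ℝ}
    (hφ : ∀ t ∈ Icc a b, HasDerivWithinAt φ (φ' t) (Icc a b) t)
    (hφ' : ∀ t ∈ Icc a b, 0 ≤ φ' t + γ * φ t) (ha : 0 ≤ φ a) :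
    ∀ t ∈ Icc a b, 0 ≤ φ t := by
  intro t ht
  have hmono := monotoneOn_exp_mul_mul_of_deriv_add_mul_nonneg hφ hφ'
    (left_mem_Icc.2 (ht.1.trans ht.2)) ht ht.1
  exact nonneg_of_mul_nonneg_right ((mul_nonneg (Real.exp_nonneg _) ha).trans hmono)
    (Real.exp_pos _)

theorem sampled_data_cbf_safety_general
    (d : ℕ) (γ δ l dt : ℝ)
    (hδ : 0 ≤ δ) (hl : 0 ≤ l)
    (h : EuclideanSpace ℝ (Fin d) → ℝ) (hh : ContDiff ℝ 1 h)
    (F : EuclideanSpace ℝ (Fin d) → EuclideanSpace ℝ (Fin d))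
    (Ψ : EuclideanSpace ℝ (Fin d) → ℝ)
    (hΨdef : ∀ y : EuclideanSpace ℝ (Fin d), Ψ y = ⟪gradient h y, F y⟫ + γ * h y)
    (hΨlip : LipschitzWith l.toNNReal Ψ)
    (hF : ∀ y : EuclideanSpace ℝ (Fin d), ‖F y‖ ≤ δ)
    (x : ℝ → EuclideanSpace ℝ (Fin d))
    (hx : ∀ t ∈ Set.Icc (0 : ℝ) dt, HasDerivAt x (F (x t)) t)
    (h0 : 0 ≤ h (x 0)) (hmargin : l * δ * dt ≤ Ψ (x 0)) :
    ∀ t ∈ Set.Icc (0 : ℝ) dt, 0 ≤ h (x t) := by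
  have hxd : ∀ t ∈ Icc 0 dt, HasDerivWithinAt x (F (x t)) (Icc 0 dt) t :=
    fun t ht => (hx t ht).hasDerivWithinAt
  have hΨx : ∀ t ∈ Icc 0 dt, 0 ≤ Ψ (x t) := by
    intro t ht
    have hlower := hΨlip.sub_mul_le_apply_of_norm_deriv_le hxd (fun s _ => hF (x s)) t ht
    rw [Real.coe_toNNReal l hl, sub_zero, ← mul_assoc] at hlower
    linarith [mul_le_mul_of_nonneg_left ht.2 (mul_nonneg hl hδ)]
  refine nonneg_of_deriv_add_mul_nonneg (φ' := fun t => ⟪gradient h (x t), F (x t)⟫) (γ := γ)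
    (fun t ht => ((hh.differentiable one_ne_zero) (x t)).hasGradientAt.comp_hasDerivWithinAt
      (hxd t ht)) (fun t ht => ?_) h0
  simpa only [hΨdef] using hΨx t ht

/-- Lemma 2: sampled-data safety over one sampling interval with the linear
class-K function `α(h) = γ h`. With `Ψ(x) = ⟪∇h(x), F(x)⟫ + γ h(x)` Lipschitz
with constant `l`, the speed of the closed-loop vector field `F` bounded by `δ`,
`h(x(0)) ≥ 0` and the sampled-data CBF condition `Ψ(x(0)) ≥ l·δ·dt`, the safe
set `{h ≥ 0}` is not left during the sampling interval `[0, dt]`. -/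
theorem sampled_data_cbf_safety
    (d : ℕ) (hd : 0 < d) (γ δ l dt : ℝ)
    (hγ : 0 ≤ γ) (hδ : 0 ≤ δ) (hl : 0 ≤ l) (hdt : 0 < dt)
    (h : EuclideanSpace ℝ (Fin d) → ℝ) (hh : ContDiff ℝ 1 h)
    (F : EuclideanSpace ℝ (Fin d) → EuclideanSpace ℝ (Fin d))
    (Ψ : EuclideanSpace ℝ (Fin d) → ℝ)
    (hΨdef : ∀ y : EuclideanSpace ℝ (Fin d), Ψ y = ⟪gradient h y, F y⟫ + γ * h y)
    (hΨlip : LipschitzWith l.toNNReal Ψ)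
    (hF : ∀ y : EuclideanSpace ℝ (Fin d), ‖F y‖ ≤ δ)
    (x : ℝ → EuclideanSpace ℝ (Fin d))
    (hx : ∀ t ∈ Set.Icc (0 : ℝ) dt, HasDerivAt x (F (x t)) t)
    (h0 : 0 ≤ h (x 0)) (hmargin : l * δ * dt ≤ Ψ (x 0)) :
    ∀ t ∈ Set.Icc (0 : ℝ) dt, 0 ≤ h (x t) :=
  sampled_data_cbf_safety_general d γ δ l dt hδ hl h hh F Ψ hΨdef hΨlip hF x hx h0 hmargin
end
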